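/- The R-transform of the Wigner semicircle distribution with variance σ² is R(z) = σ²z; that is, the function V(z) = 1/z + σ²z satisfies G(V(z)) = z for z in a neighborhood of 0 in the lower half plane, where G is the Cauchy transform of μ_{W,σ²}. -/

import Mathlib

open MeasureTheory Complex

/-- The Wigner semicircle distribution with mean `0` and variance `v`. -/
noncomputable def semicircleMeasure (v : ℝ) : Measure ℝ :=
  MeasureTheory.volume.withDensity fun x =>
    ENNReal.ofReal (Real.sqrt (4 * v - x ^ 2) / (2 * Real.pi * v))

/-! Expanding `(w - x)⁻¹` as a geometric series in `x / w` turns the Cauchy transform `G(w)` of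
the semicircle law into the generating series of its moments. The odd moments vanish and the
even ones are `catalan n * v ^ n` (substitute `x = 2√v sin θ`), so for large `‖w‖`,
`w G(w) = ∑ catalan n * (v / w²) ^ n`: the Catalan generating function at `t = v / w²`, i.e. the
small root `S` of `S = 1 + t S²`. For `w = z⁻¹ + v z` the number `w z = 1 + v z²` is a small root
of the same equation, hence `G(w) = z`. -/

lemma semicircleDensity_eq_zero_of_le_abs {v x : ℝ} (hx : 2 * √v ≤ |x|) :
    √(4 * v - x ^ 2) / (2 * Real.pi * v) = 0 := by
  have hv : 4 * v ≤ x ^ 2 := by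
    rcases lt_or_ge v 0 with hv | hv
    · nlinarith [sq_nonneg x]
    · nlinarith [Real.sq_sqrt hv, sq_abs x, Real.sqrt_nonneg v]
  rw [Real.sqrt_eq_zero_of_nonpos (by linarith), zero_div]

lemma semicircleDensity_nonneg (v x : ℝ) : 0 ≤ √(4 * v - x ^ 2) / (2 * Real.pi * v) := by
  rcases lt_or_ge v 0 with hv | hv
  · rw [Real.sqrt_eq_zero_of_nonpos (by nlinarith [sq_nonneg x]), zero_div]
  · positivity

lemma continuous_semicircleDensity (v : ℝ) :
    Continuous fun x : ℝ => √(4 * v - x ^ 2) / (2 * Real.pi * v) := by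
  fun_prop

lemma ae_abs_le_semicircleMeasure (v : ℝ) : ∀ᵐ x ∂semicircleMeasure v, |x| ≤ 2 * √v := by
  rw [semicircleMeasure,
    ae_withDensity_iff (continuous_semicircleDensity v).measurable.ennreal_ofReal]
  refine ae_of_all _ fun x hx => le_of_not_gt fun hlt => hx ?_
  rw [semicircleDensity_eq_zero_of_le_abs hlt.le, ENNReal.ofReal_zero]

instance (v : ℝ) : IsFiniteMeasure (semicircleMeasure v) := by
  refine isFiniteMeasure_withDensity_ofReal (Continuous.integrable_of_hasCompactSupport
    (continuous_semicircleDensity v) ?_).hasFiniteIntegral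
  refine HasCompactSupport.intro (isCompact_Icc (a := -(2 * √v)) (b := 2 * √v)) fun x hx => ?_
  exact semicircleDensity_eq_zero_of_le_abs (le_of_not_ge fun h => hx (abs_le.1 h))

lemma integral_semicircleMeasure {v : ℝ} (f : ℝ → ℝ) :
    ∫ x, f x ∂semicircleMeasure v =
      ∫ x in -(2 * √v)..2 * √v, √(4 * v - x ^ 2) / (2 * Real.pi * v) * f x := by
  have hmeas := (continuous_semicircleDensity v).measurable.ennreal_ofReal
  rw [semicircleMeasure, integral_withDensity_eq_integral_toReal_smul hmeas
    (ae_of_all _ fun _ => ENNReal.ofReal_lt_top)]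
  simp_rw [ENNReal.toReal_ofReal (semicircleDensity_nonneg v _), smul_eq_mul]
  rw [intervalIntegral.integral_of_le (neg_le_self (by positivity))]
  refine (setIntegral_eq_integral_of_forall_compl_eq_zero fun x hx => ?_).symm
  have hx : 2 * √v ≤ |x| := by
    simp only [Set.mem_Ioc, not_and_or, not_lt, not_le] at hx
    exact le_abs'.2 (hx.imp id le_of_lt)
  rw [semicircleDensity_eq_zero_of_le_abs hx, zero_mul]

lemma integral_sin_pow_add_two_symm (k : ℕ) :
    ∫ θ in -(Real.pi / 2)..Real.pi / 2, Real.sin θ ^ (k + 2) =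
      (k + 1) / (k + 2) * ∫ θ in -(Real.pi / 2)..Real.pi / 2, Real.sin θ ^ k := by
  simp [integral_sin_pow, Real.cos_pi_div_two]

lemma integral_pow_mul_sqrt_sq_sub_sq {a : ℝ} (ha : 0 ≤ a) (k : ℕ) :
    ∫ x in -a..a, x ^ k * √(a ^ 2 - x ^ 2) =
      a ^ (k + 2) / (k + 2) * ∫ θ in -(Real.pi / 2)..Real.pi / 2, Real.sin θ ^ k := by
  have hsubst := intervalIntegral.integral_comp_mul_deriv (a := -(Real.pi / 2)) (b := Real.pi / 2)
    (f := fun θ => a * Real.sin θ) (f' := fun θ => a * Real.cos θ)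
    (g := fun x => x ^ k * √(a ^ 2 - x ^ 2))
    (fun θ _ => (Real.hasDerivAt_sin θ).const_mul a) (by fun_prop) (by fun_prop)
  simp only [Real.sin_neg, Real.sin_pi_div_two, mul_neg, mul_one, Function.comp_def] at hsubst
  have hintegrand : ∀ θ ∈ Set.uIcc (-(Real.pi / 2)) (Real.pi / 2),
      (a * Real.sin θ) ^ k * √(a ^ 2 - (a * Real.sin θ) ^ 2) * (a * Real.cos θ) =
        a ^ (k + 2) * (Real.sin θ ^ k - Real.sin θ ^ (k + 2)) := by
    intro θ hθ
    rw [Set.uIcc_of_le (by linarith [Real.pi_pos])] at hθ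
    have hcos : 0 ≤ a * Real.cos θ := mul_nonneg ha (Real.cos_nonneg_of_mem_Icc hθ)
    have hcos_sq := Real.cos_sq' θ
    rw [show a ^ 2 - (a * Real.sin θ) ^ 2 = (a * Real.cos θ) ^ 2 by
      linear_combination (-a ^ 2) * hcos_sq,
      Real.sqrt_sq hcos]
    linear_combination a ^ (k + 2) * Real.sin θ ^ k * hcos_sq
  rw [← hsubst, intervalIntegral.integral_congr hintegrand, intervalIntegral.integral_const_mul,
    intervalIntegral.integral_sub (f := fun θ => Real.sin θ ^ k)
      (g := fun θ => Real.sin θ ^ (k + 2)) (by apply Continuous.intervalIntegrable; fun_prop)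
      (by apply Continuous.intervalIntegrable; fun_prop), integral_sin_pow_add_two_symm]
  field_simp
  ring

lemma sq_two_mul_sqrt {v : ℝ} (hv : 0 ≤ v) : (2 * √v) ^ 2 = 4 * v := by
  rw [mul_pow, Real.sq_sqrt hv]
  norm_num

noncomputable def semicircleMoment (v : ℝ) (k : ℕ) : ℝ := ∫ x, x ^ k ∂semicircleMeasure v

lemma semicircleMoment_eq {v : ℝ} (hv : 0 < v) (k : ℕ) :
    semicircleMoment v k = (2 * √v) ^ (k + 2) / ((k + 2) * (2 * Real.pi * v)) *
      ∫ θ in -(Real.pi / 2)..Real.pi / 2, Real.sin θ ^ k := by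
  have hintegrand : ∀ x : ℝ, √(4 * v - x ^ 2) / (2 * Real.pi * v) * x ^ k =
      (2 * Real.pi * v)⁻¹ * (x ^ k * √((2 * √v) ^ 2 - x ^ 2)) := fun x => by
    rw [sq_two_mul_sqrt hv.le]; ring
  rw [semicircleMoment, integral_semicircleMeasure, funext hintegrand,
    intervalIntegral.integral_const_mul, integral_pow_mul_sqrt_sq_sub_sq (by positivity)]
  field_simp

lemma semicircleMoment_zero {v : ℝ} (hv : 0 < v) : semicircleMoment v 0 = 1 := by
  rw [semicircleMoment_eq hv]
  simp only [zero_add, sq_two_mul_sqrt hv.le, CharP.cast_eq_zero, pow_zero,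
    intervalIntegral.integral_const, sub_neg_eq_add, add_halves, smul_eq_mul, mul_one]
  field_simp
  ring

lemma semicircleMoment_one {v : ℝ} (hv : 0 < v) : semicircleMoment v 1 = 0 := by
  simp [semicircleMoment_eq hv, integral_sin]

lemma semicircleMoment_add_two {v : ℝ} (hv : 0 < v) (k : ℕ) :
    semicircleMoment v (k + 2) = 4 * v * (k + 1) / (k + 4) * semicircleMoment v k := by
  rw [semicircleMoment_eq hv, semicircleMoment_eq hv, integral_sin_pow_add_two_symm,
    pow_add _ (k + 2), sq_two_mul_sqrt hv.le]
  push_cast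
  field_simp
  ring

lemma semicircleMoment_odd {v : ℝ} (hv : 0 < v) (n : ℕ) : semicircleMoment v (2 * n + 1) = 0 := by
  induction n with
  | zero => exact semicircleMoment_one hv
  | succ n ih =>
    rw [show 2 * (n + 1) + 1 = 2 * n + 1 + 2 by ring, semicircleMoment_add_two hv, ih, mul_zero]

lemma add_two_mul_catalan_succ (n : ℕ) :
    (n + 2) * catalan (n + 1) = 2 * (2 * n + 1) * catalan n := by
  refine Nat.eq_of_mul_eq_mul_left n.succ_pos ?_
  calc (n + 1) * ((n + 2) * catalan (n + 1)) = (n + 1) * (n + 1).centralBinom := by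
        rw [← succ_mul_catalan_eq_centralBinom]
    _ = 2 * (2 * n + 1) * n.centralBinom := Nat.succ_mul_centralBinom_succ n
    _ = (n + 1) * (2 * (2 * n + 1) * catalan n) := by rw [← succ_mul_catalan_eq_centralBinom]; ring

lemma semicircleMoment_even {v : ℝ} (hv : 0 < v) (n : ℕ) :
    semicircleMoment v (2 * n) = catalan n * v ^ n := by
  induction n with
  | zero => simp [semicircleMoment_zero hv]
  | succ n ih =>
    have hcat : ((n : ℝ) + 2) * catalan (n + 1) = 2 * (2 * n + 1) * catalan n := by
      exact_mod_cast add_two_mul_catalan_succ n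
    rw [mul_add_one, semicircleMoment_add_two hv, ih, pow_succ]
    push_cast
    field_simp
    linear_combination (-2) * hcat

lemma hasSum_pow_mul_inv_pow_succ {K : Type*} [NormedField K] {w x : K}
    (hx : ‖x‖ < ‖w‖) : HasSum (fun k => x ^ k * w⁻¹ ^ (k + 1)) (w - x)⁻¹ := by
  have hw : w ≠ 0 := norm_pos_iff.1 ((norm_nonneg x).trans_lt hx)
  have hwx : w - x ≠ 0 := sub_ne_zero.2 fun h => hx.ne (by rw [h])
  have hratio : ‖x * w⁻¹‖ < 1 := by
    rwa [norm_mul, norm_inv, mul_inv_lt_iff₀ ((norm_nonneg x).trans_lt hx), one_mul]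
  have hsum := (hasSum_geometric_of_norm_lt_one hratio).mul_right w⁻¹
  rw [show (1 - x * w⁻¹)⁻¹ * w⁻¹ = (w - x)⁻¹ by field_simp] at hsum
  have hterm : (fun k => x ^ k * w⁻¹ ^ (k + 1)) = fun k => (x * w⁻¹) ^ k * w⁻¹ := by
    ext k
    ring
  rwa [hterm]

lemma hasSum_semicircleMoment_mul_inv_pow {v : ℝ} {w : ℂ} (hw : 2 * √v < ‖w‖) :
    HasSum (fun k => (semicircleMoment v k : ℂ) * w⁻¹ ^ (k + 1))
      (∫ x, (w - x)⁻¹ ∂semicircleMeasure v) := by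
  have hratio : 2 * √v * ‖w⁻¹‖ < 1 := by
    rwa [norm_inv, mul_inv_lt_iff₀ ((by positivity : (0 : ℝ) ≤ 2 * √v).trans_lt hw), one_mul]
  have hseries := hasSum_integral_of_dominated_convergence
    (F := fun k (x : ℝ) => (x : ℂ) ^ k * w⁻¹ ^ (k + 1))
    (bound := fun k _ => ‖w⁻¹‖ * (2 * √v * ‖w⁻¹‖) ^ k)
    (fun k => ((Complex.continuous_ofReal.pow k).mul continuous_const).aestronglyMeasurable)
    (fun k => by
      filter_upwards [ae_abs_le_semicircleMeasure v] with x hx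
      calc ‖(x : ℂ) ^ k * w⁻¹ ^ (k + 1)‖ = |x| ^ k * ‖w⁻¹‖ ^ (k + 1) := by
            rw [norm_mul, norm_pow, norm_pow, Complex.norm_real, Real.norm_eq_abs]
        _ ≤ (2 * √v) ^ k * ‖w⁻¹‖ ^ (k + 1) := by gcongr
        _ = ‖w⁻¹‖ * (2 * √v * ‖w⁻¹‖) ^ k := by ring)
    (ae_of_all _ fun _ => (summable_geometric_of_lt_one (by positivity) hratio).mul_left _)
    (integrable_const _)
    (by
      filter_upwards [ae_abs_le_semicircleMeasure v] with x hx
      refine hasSum_pow_mul_inv_pow_succ ?_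
      rw [Complex.norm_real, Real.norm_eq_abs]
      exact hx.trans_lt hw)
  have hterm : ∀ k, ∫ x, (x : ℂ) ^ k * w⁻¹ ^ (k + 1) ∂semicircleMeasure v =
      (semicircleMoment v k : ℂ) * w⁻¹ ^ (k + 1) := fun k => by
    rw [integral_mul_const, semicircleMoment]
    exact_mod_cast congrArg (· * w⁻¹ ^ (k + 1)) integral_ofReal
  simpa only [hterm] using hseries

lemma hasSum_catalan_mul_pow_semicircle {v : ℝ} (hv : 0 < v) {w : ℂ} (hw : 2 * √v < ‖w‖) :
    HasSum (fun n => (catalan n : ℂ) * (v / w ^ 2) ^ n)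
      (w * ∫ x, (w - x)⁻¹ ∂semicircleMeasure v) := by
  have hw0 : w ≠ 0 := norm_pos_iff.1 ((by positivity : (0 : ℝ) ≤ 2 * √v).trans_lt hw)
  have hodd : ∀ k ∉ Set.range (2 * ·), (semicircleMoment v k : ℂ) * w⁻¹ ^ (k + 1) = 0 := by
    intro k hk
    obtain ⟨n, rfl⟩ : Odd k := Nat.not_even_iff_odd.1 fun ⟨n, hn⟩ => hk ⟨n, by dsimp only; omega⟩
    simp [semicircleMoment_odd hv]
  have heven := ((mul_right_injective₀ two_ne_zero).hasSum_iff hodd).2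
    (hasSum_semicircleMoment_mul_inv_pow hw)
  have hterm : ∀ n, w * ((semicircleMoment v (2 * n) : ℂ) * w⁻¹ ^ (2 * n + 1)) =
      (catalan n : ℂ) * (v / w ^ 2) ^ n := fun n => by
    rw [semicircleMoment_even hv, inv_pow, div_pow, ← pow_mul, pow_succ]
    push_cast
    field_simp
  simpa only [Function.comp_def, hterm] using heven.mul_left w

lemma catalan_le_four_pow (n : ℕ) : catalan n ≤ 4 ^ n := by
  rw [catalan_eq_centralBinom_div]
  exact (Nat.div_le_self _ _).trans (Nat.centralBinom_le_four_pow n)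

lemma norm_catalan_mul_pow_le (t : ℂ) (n : ℕ) : ‖(catalan n : ℂ) * t ^ n‖ ≤ (4 * ‖t‖) ^ n := by
  rw [norm_mul, norm_pow, Complex.norm_natCast, mul_pow]
  gcongr
  exact_mod_cast catalan_le_four_pow n

lemma summable_norm_catalan_mul_pow {t : ℂ} (ht : ‖t‖ < 1 / 4) :
    Summable fun n => ‖(catalan n : ℂ) * t ^ n‖ :=
  .of_nonneg_of_le (fun _ => norm_nonneg _) (norm_catalan_mul_pow_le t)
    (summable_geometric_of_lt_one (by positivity) (by linarith))

lemma norm_tsum_catalan_mul_pow_le {t : ℂ} (ht : ‖t‖ < 1 / 4) :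
    ‖∑' n, (catalan n : ℂ) * t ^ n‖ ≤ (1 - 4 * ‖t‖)⁻¹ := by
  have hgeom : 4 * ‖t‖ < 1 := by linarith
  calc ‖∑' n, (catalan n : ℂ) * t ^ n‖ ≤ ∑' n, ‖(catalan n : ℂ) * t ^ n‖ :=
        norm_tsum_le_tsum_norm (summable_norm_catalan_mul_pow ht)
    _ ≤ ∑' n, (4 * ‖t‖) ^ n :=
        (summable_norm_catalan_mul_pow ht).tsum_le_tsum (norm_catalan_mul_pow_le t)
          (summable_geometric_of_lt_one (by positivity) hgeom)
    _ = (1 - 4 * ‖t‖)⁻¹ := tsum_geometric_of_lt_one (by positivity) hgeom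

lemma tsum_catalan_mul_pow_eq_one_add {t : ℂ} (ht : ‖t‖ < 1 / 4) :
    ∑' n, (catalan n : ℂ) * t ^ n = 1 + t * (∑' n, (catalan n : ℂ) * t ^ n) ^ 2 := by
  have hsummable := summable_norm_catalan_mul_pow ht
  have hsq : (∑' n, (catalan n : ℂ) * t ^ n) ^ 2 = ∑' n, (catalan (n + 1) : ℂ) * t ^ n := by
    rw [sq, tsum_mul_tsum_eq_tsum_sum_antidiagonal_of_summable_norm hsummable hsummable]
    congr 1 with n
    rw [catalan_succ', Nat.cast_sum, Finset.sum_mul]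
    refine Finset.sum_congr rfl fun ij hij => ?_
    rw [← Finset.HasAntidiagonal.mem_antidiagonal.1 hij, pow_add]
    push_cast
    ring
  rw [hsq, ← tsum_mul_left, hsummable.of_norm.tsum_eq_zero_add]
  simp only [catalan_zero, Nat.cast_one, pow_zero, mul_one, pow_succ]
  congr 2 with n
  ring

lemma eq_of_eq_one_add_mul_sq {t S Q : ℂ} (hS : S = 1 + t * S ^ 2) (hQ : Q = 1 + t * Q ^ 2)
    (hsmall : ‖t‖ * (‖S‖ + ‖Q‖) < 1) : S = Q := by
  have hfactor : (S - Q) * (1 - t * (S + Q)) = 0 := by linear_combination hS - hQ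
  refine sub_eq_zero.1 ((mul_eq_zero.1 hfactor).resolve_right fun h => ?_)
  have hone : ‖t * (S + Q)‖ = 1 := by rw [← sub_eq_zero.1 h, norm_one]
  have := norm_add_le S Q
  rw [norm_mul] at hone
  nlinarith [norm_nonneg t]

lemma hasSum_catalan_mul_pow_of_eq_one_add {t Q : ℂ} (ht : ‖t‖ ≤ 1 / 16)
    (hQ : Q = 1 + t * Q ^ 2) (hQ_le : ‖Q‖ ≤ 2) : HasSum (fun n => (catalan n : ℂ) * t ^ n) Q := by
  have ht' : ‖t‖ < 1 / 4 := by linarith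
  have hS_le : ‖∑' n, (catalan n : ℂ) * t ^ n‖ ≤ 2 :=
    (norm_tsum_catalan_mul_pow_le ht').trans
      (inv_le_of_inv_le₀ (by norm_num) (by linarith [norm_nonneg t]))
  have hS_eq_Q := eq_of_eq_one_add_mul_sq (tsum_catalan_mul_pow_eq_one_add ht') hQ
    (by nlinarith [norm_nonneg t])
  exact hS_eq_Q ▸ (summable_norm_catalan_mul_pow ht').of_norm.hasSum

lemma sqrt_mul_norm_lt {v : ℝ} (hv : 0 < v) {z : ℂ} (hz : ‖z‖ < (8 * √v)⁻¹) :
    √v * ‖z‖ < 1 / 8 := by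
  have hs : 0 < √v := Real.sqrt_pos.2 hv
  calc √v * ‖z‖ < √v * (8 * √v)⁻¹ := by gcongr
    _ = 1 / 8 := by field_simp

lemma norm_ofReal_mul_sq_le {v : ℝ} (hv : 0 < v) {z : ℂ} (hz : ‖z‖ < (8 * √v)⁻¹) :
    ‖(v : ℂ) * z ^ 2‖ ≤ 1 / 64 := by
  rw [norm_mul, norm_pow, Complex.norm_real, Real.norm_of_nonneg hv.le, ← Real.sq_sqrt hv.le]
  nlinarith [sqrt_mul_norm_lt hv hz, mul_nonneg (Real.sqrt_nonneg v) (norm_nonneg z)]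

lemma four_mul_sqrt_lt_norm_inv_add {v : ℝ} (hv : 0 < v) {z : ℂ} (hz0 : z ≠ 0)
    (hz : ‖z‖ < (8 * √v)⁻¹) : 4 * √v < ‖z⁻¹ + v * z‖ := by
  have hmul := norm_sub_le ((z⁻¹ + v * z) * z) (v * z ^ 2)
  rw [show (z⁻¹ + v * z) * z - v * z ^ 2 = 1 by field_simp; ring, norm_one, norm_mul] at hmul
  have := sqrt_mul_norm_lt hv hz
  have := norm_ofReal_mul_sq_le hv hz
  exact lt_of_mul_lt_mul_right (by linarith) (norm_nonneg z)

/-- The R-transform of the Wigner semicircle distribution with variance `v = σ²` is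
`R(z) = v·z`: the function `V(z) = 1/z + v·z` satisfies `G(V(z)) = z` for `z` in a
neighborhood of `0` in the lower half-plane, where `G` is the Cauchy transform of the
semicircle distribution. -/
theorem semicircle_R_transform (v : ℝ) (hv : 0 < v) :
    ∃ ε > (0 : ℝ), ∀ z : ℂ, z.im < 0 → ‖z‖ < ε →
      ∫ x : ℝ, ((z⁻¹ + v * z) - (x : ℂ))⁻¹ ∂(semicircleMeasure v) = z := by
  refine ⟨(8 * √v)⁻¹, by positivity, fun z hz_im hz => ?_⟩
  have hz0 : z ≠ 0 := fun h => by simp [h] at hz_im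
  set w := z⁻¹ + v * z
  have hwz : w * z = 1 + v * z ^ 2 := by simp only [w]; field_simp
  have hw : 4 * √v < ‖w‖ := four_mul_sqrt_lt_norm_inv_add hv hz0 hz
  have hw0 : w ≠ 0 := norm_pos_iff.1 ((by positivity : (0 : ℝ) ≤ 4 * √v).trans_lt hw)
  have ht : ‖(v : ℂ) / w ^ 2‖ ≤ 1 / 16 := by
    rw [norm_div, norm_pow, Complex.norm_real, Real.norm_of_nonneg hv.le,
      div_le_iff₀ (by positivity)]
    nlinarith [Real.sq_sqrt hv.le, Real.sqrt_nonneg v]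
  have hQ := hasSum_catalan_mul_pow_of_eq_one_add ht (Q := w * z)
    (by field_simp; linear_combination hwz)
    (by rw [hwz]; linarith [norm_add_le (1 : ℂ) (v * z ^ 2), norm_ofReal_mul_sq_le hv hz,
      norm_one (α := ℂ)])
  have hG := hasSum_catalan_mul_pow_semicircle hv (by linarith [Real.sqrt_nonneg v] : 2 * √v < ‖w‖)
  exact mul_left_cancel₀ hw0 (hG.unique hQ)
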